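/- Let Q, q ≥ 1 and a be integers with gcd(a,q) = 1 and gcd(Q,q) < q. Suppose α is a real number with |α − a/q| ≤ 1/(2qQ), and let c₀ be an integer. Then the absolute value of the sum of e(αn) over integers n with N ≤ n < 2N and n ≡ c₀ (mod Q) is O(q/gcd(Q,q)). -/

import Mathlib

open Finset

/-- `e x = exp(2πix)`. -/
noncomputable def e (x : ℝ) : ℂ := Complex.exp (2 * Real.pi * Complex.I * (x : ℂ))

lemma e_norm (x : ℝ) : ‖e x‖ = 1 := by
  rw [e, Complex.norm_exp]
  norm_num [Complex.mul_re, Complex.mul_im]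

lemma e_add (x y : ℝ) : e (x + y) = e x * e y := by
  rw [e, e, e, ← Complex.exp_add]
  push_cast
  ring_nf

lemma e_nat_mul (x : ℝ) (n : ℕ) : e (x * n) = (e x) ^ n := by
  rw [e, e, ← Complex.exp_nat_mul]
  push_cast
  ring_nf

lemma geom_bound (z : ℂ) (hz : ‖z‖ = 1) (h1 : z ≠ 1) (M : ℕ) :
    ‖∑ j ∈ range M, z ^ j‖ ≤ 2 / ‖z - 1‖ := by
  have hpos : 0 < ‖z - 1‖ := by
    rw [norm_pos_iff]; intro h; exact h1 (sub_eq_zero.mp h)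
  rw [geom_sum_eq h1, norm_div]
  gcongr
  calc ‖z ^ M - 1‖ ≤ ‖z ^ M‖ + ‖(1:ℂ)‖ := norm_sub_le _ _
    _ = 2 := by rw [norm_pow, hz]; norm_num

lemma e_sub_one (β : ℝ) : ‖e β - 1‖ = 2 * |Real.sin (Real.pi * β)| := by
  have h : e β - 1 = Complex.ofReal (Real.cos (2*Real.pi*β) - 1)
      + Complex.ofReal (Real.sin (2*Real.pi*β)) * Complex.I := by
    have h2 : (2 * Real.pi * Complex.I * (β:ℂ)) = ((2 * Real.pi * β : ℝ) : ℂ) * Complex.I := by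
      push_cast; ring
    rw [e, h2, Complex.exp_mul_I]
    push_cast [Complex.ofReal_cos, Complex.ofReal_sin]
    ring
  rw [h, Complex.norm_add_mul_I]
  have key : (Real.cos (2*Real.pi*β) - 1)^2 + (Real.sin (2*Real.pi*β))^2
      = (2 * |Real.sin (Real.pi * β)|)^2 := by
    have h3 : 2*Real.pi*β = 2*(Real.pi*β) := by ring
    rw [h3, Real.cos_two_mul]
    have := Real.sin_sq_add_cos_sq (Real.pi*β)
    rw [Real.sin_two_mul]
    have habs : |Real.sin (Real.pi*β)|^2 = Real.sin (Real.pi*β)^2 := sq_abs _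
    nlinarith
  rw [key, Real.sqrt_sq_eq_abs, abs_of_nonneg (by positivity)]

lemma sin_lower (β : ℝ) : 2 * |β - round β| ≤ |Real.sin (Real.pi * β)| := by
  set k := round β with hk
  set δ := β - (k:ℝ) with hδ
  have h1 : |δ| ≤ 1/2 := abs_sub_round β
  have hsplit : Real.sin (Real.pi * β) = (-1)^k * Real.sin (Real.pi * δ) := by
    have : Real.pi * β = Real.pi * δ + (k:ℝ) * Real.pi := by rw [hδ]; ring
    rw [this, Real.sin_add_int_mul_pi]
  have habs : |Real.sin (Real.pi * β)| = |Real.sin (Real.pi * δ)| := by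
    have h9 : |((-1:ℝ))^k| = 1 := by
      rcases Int.even_or_odd k with h | h
      · rw [h.neg_one_zpow, abs_one]
      · rw [h.neg_one_zpow, abs_neg, abs_one]
    rw [hsplit, abs_mul, h9, one_mul]
  rw [habs]
  have hpi := Real.pi_pos
  have key : Real.sin (Real.pi * |δ|) = |Real.sin (Real.pi * δ)| := by
    rcases le_or_gt 0 δ with h | h
    · rw [abs_of_nonneg h, abs_of_nonneg]
      apply Real.sin_nonneg_of_nonneg_of_le_pi (by positivity)
      nlinarith [abs_of_nonneg h ▸ h1]
    · rw [abs_of_neg h, abs_of_nonpos, mul_neg, Real.sin_neg]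
      apply Real.sin_nonpos_of_nonpos_of_neg_pi_le <;> nlinarith [abs_of_neg h ▸ h1]
  have hjordan := Real.mul_le_sin (x := Real.pi * |δ|) (by positivity)
    (by nlinarith)
  rw [key] at hjordan
  calc 2 * |δ| = 2 / Real.pi * (Real.pi * |δ|) := by
        field_simp
    _ ≤ |Real.sin (Real.pi * δ)| := hjordan

lemma AP_decomp (Q N c₀ : ℤ) (hQ : 0 < Q) :
    ∃ (n₀ : ℤ) (M : ℕ), n₀ % Q = c₀ % Q ∧
      (Finset.Ico N (2*N)).filter (fun n => n % Q = c₀ % Q) =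
        (Finset.range M).image (fun j : ℕ => n₀ + Q * (j:ℤ)) := by
  set r := c₀ % Q with hr
  have hr0 : 0 ≤ r := Int.emod_nonneg _ (ne_of_gt hQ)
  have hrQ : r < Q := Int.emod_lt_of_pos _ hQ
  set d := (r - N) / Q with hd
  have e1 : Q * d + (r - N) % Q = r - N := Int.mul_ediv_add_emod _ _
  have e1a : 0 ≤ (r - N) % Q := Int.emod_nonneg _ (ne_of_gt hQ)
  have e1b : (r - N) % Q < Q := Int.emod_lt_of_pos _ hQ
  set n₀ := r - Q * d with hn₀
  have hn₀mod : n₀ % Q = c₀ % Q := by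
    have : n₀ = r + Q * (-d) := by rw [hn₀]; ring
    rw [this, Int.add_mul_emod_self_left, hr, Int.emod_emod_of_dvd _ dvd_rfl]
  have hb1 : N ≤ n₀ := by nlinarith
  have hb2 : n₀ < N + Q := by nlinarith
  set x := 2*N - n₀ with hx
  set M' := (x + Q - 1) / Q with hM'
  have e3 : Q * M' + (x + Q - 1) % Q = x + Q - 1 := Int.mul_ediv_add_emod _ _
  have e3a : 0 ≤ (x + Q - 1) % Q := Int.emod_nonneg _ (ne_of_gt hQ)
  have e3b : (x + Q - 1) % Q < Q := Int.emod_lt_of_pos _ hQ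
  have hM'1 : x ≤ Q * M' := by linarith
  have hM'2 : Q * M' < x + Q := by linarith
  set M := M'.toNat with hM
  have hQM : x ≤ Q * M := by
    rcases le_or_gt 0 M' with h | h
    · rwa [hM, Int.toNat_of_nonneg h]
    · have : Q * M' ≤ Q * (-1) := by
        apply mul_le_mul_of_nonneg_left (by omega) (le_of_lt hQ)
      have hM0 : (M:ℤ) = 0 := by simp [hM]; omega
      rw [hM0]; nlinarith
  have hupper : ∀ j : ℕ, (j:ℤ) < M → n₀ + Q * j < 2*N := by
    intro j hj
    have hM'pos : 0 < M' := by
      by_contra h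
      push_neg at h
      have : (M:ℤ) = 0 := by simp [hM]; omega
      omega
    have hMM' : (M:ℤ) = M' := by rw [hM, Int.toNat_of_nonneg (le_of_lt hM'pos)]
    have hjle : (j:ℤ) ≤ M' - 1 := by omega
    have : Q * (j:ℤ) ≤ Q * (M' - 1) := mul_le_mul_of_nonneg_left hjle (le_of_lt hQ)
    nlinarith
  refine ⟨n₀, M, hn₀mod, ?_⟩
  ext n
  simp only [Finset.mem_filter, Finset.mem_Ico, Finset.mem_image, Finset.mem_range]
  constructor
  · rintro ⟨⟨hN, h2N⟩, hmod⟩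
    have hdvd : Q ∣ n - n₀ := Int.ModEq.dvd (show Int.ModEq Q n₀ n by
      unfold Int.ModEq; rw [hn₀mod, hmod])
    obtain ⟨t, ht⟩ := hdvd
    have ht0 : 0 ≤ t := by
      have h1 : Q * (-1) < Q * t := by nlinarith
      have := (mul_lt_mul_iff_right₀ hQ).mp h1
      omega
    have htM : t < M := by
      have h1 : Q * t < Q * M := by nlinarith
      exact (mul_lt_mul_iff_right₀ hQ).mp h1
    refine ⟨t.toNat, by omega, ?_⟩
    rw [Int.toNat_of_nonneg ht0]; linarith
  · rintro ⟨j, hj, rfl⟩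
    have hj0 : (0:ℤ) ≤ Q * j := mul_nonneg hQ.le (by positivity)
    refine ⟨⟨by omega, hupper j (by exact_mod_cast hj)⟩, ?_⟩
    rw [Int.add_mul_emod_self_left, hn₀mod]

/-- If `gcd(a,q)=1`, `gcd(Q,q) < q` and `|α - a/q| ≤ 1/(2qQ)`, then the sum of `e(αn)` over
`N ≤ n < 2N` with `n ≡ c₀ (mod Q)` is `O(q / gcd(Q,q))`, uniformly in `N`, `c₀` and `α`. -/
theorem stmt_2 : ∃ C : ℝ, 0 < C ∧ ∀ (Q q : ℕ) (a : ℤ) (α : ℝ) (c₀ N : ℤ),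
    1 ≤ Q → 1 ≤ q → Int.gcd a q = 1 → Nat.gcd Q q < q →
    |α - (a : ℝ) / q| ≤ 1 / (2 * q * Q) →
    ‖∑ n ∈ (Finset.Ico N (2*N)).filter (fun n => n % (Q : ℤ) = c₀ % (Q : ℤ)),
        e (α * (n : ℝ))‖ ≤ C * ((q : ℝ) / (Nat.gcd Q q : ℝ)) := by
  refine ⟨1, one_pos, ?_⟩
  intro Q q a α c₀ N hQ hq hco hgcd hα
  set g := Nat.gcd Q q with hg
  have hg_pos : 0 < g := Nat.gcd_pos_of_pos_left _ (by omega)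
  set q' := q / g with hq'
  have hqq' : q = g * q' := (Nat.mul_div_cancel' (Nat.gcd_dvd_right Q q)).symm
  set Q' := Q / g with hQ'
  have hQQ' : Q = g * Q' := (Nat.mul_div_cancel' (Nat.gcd_dvd_left Q q)).symm
  have hq'2 : 2 ≤ q' := by
    rcases Nat.lt_or_ge q' 2 with h | h
    · interval_cases q' <;> omega
    · exact h
  have hcop : Nat.Coprime Q' q' := Nat.coprime_div_gcd_div_gcd hg_pos
  have hcopa : Nat.Coprime a.natAbs q' := by
    have h1 : Nat.Coprime a.natAbs q := by
      have : Int.gcd a (q:ℤ) = a.natAbs.gcd q := by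
        rw [Int.gcd]; simp
      rwa [this] at hco
    exact Nat.Coprime.coprime_dvd_right ⟨g, by rw [hqq']; ring⟩ h1
  have hcop2 : Nat.Coprime (a.natAbs * Q') q' := Nat.Coprime.mul hcopa hcop
  set β := α * Q with hβ
  set k := round β with hk
  set δ := β - (k:ℝ) with hδ
  -- Step A : |aQ/q - k| ≥ 1/q'
  have hqR : (0:ℝ) < q := by positivity
  have hQR : (0:ℝ) < Q := by exact_mod_cast by omega
  have hq'R : (0:ℝ) < q' := by exact_mod_cast by omega
  have hgR : (0:ℝ) < g := by exact_mod_cast hg_pos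
  have hstepA : 1 / (q':ℝ) ≤ |(a:ℝ) * Q / q - k| := by
    have hnum : a * (Q':ℤ) - k * q' ≠ 0 := by
      intro h
      have hdvd : ((q':ℕ):ℤ) ∣ a * (Q':ℤ) := ⟨k, by linear_combination h⟩
      rw [Int.natCast_dvd] at hdvd
      have : (a * (Q':ℤ)).natAbs = a.natAbs * Q' := by
        rw [Int.natAbs_mul]; simp
      rw [this] at hdvd
      have := Nat.Coprime.eq_one_of_dvd hcop2.symm hdvd
      omega
    have h1 : (1:ℝ) ≤ |(a:ℝ) * Q' - k * q'| := by
      have h0 := Int.one_le_abs hnum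
      calc (1:ℝ) ≤ ((|a * (Q':ℤ) - k * q'| : ℤ) : ℝ) := by exact_mod_cast h0
        _ = |((a * (Q':ℤ) - k * q' : ℤ) : ℝ)| := by rw [Int.cast_abs]
        _ = |(a:ℝ) * Q' - k * q'| := by push_cast; ring_nf
    have heq : (a:ℝ) * Q / q - k = ((a:ℝ) * Q' - k * q') / q' := by
      rw [show ((Q:ℕ):ℝ) = (g:ℝ) * Q' by exact_mod_cast congrArg Nat.cast hQQ',
          show ((q:ℕ):ℝ) = (g:ℝ) * q' by exact_mod_cast congrArg Nat.cast hqq']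
      field_simp
    rw [heq, abs_div, abs_of_pos hq'R, div_le_div_iff₀ hq'R hq'R, one_mul]
    nlinarith
  -- Step B : |β - aQ/q| ≤ 1/(2q)
  have hstepB : |β - (a:ℝ) * Q / q| ≤ 1 / (2*q) := by
    have : β - (a:ℝ) * Q / q = (α - (a:ℝ)/q) * Q := by field_simp; ring
    rw [this, abs_mul, abs_of_pos hQR]
    calc |α - (a:ℝ)/q| * Q ≤ (1 / (2*q*Q)) * Q := by
          apply mul_le_mul_of_nonneg_right hα (le_of_lt hQR)
      _ = 1/(2*q) := by field_simp
  -- Step C : |δ| ≥ 1/(2q')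
  have hq'q : (q':ℝ) ≤ q := by
    exact_mod_cast Nat.div_le_self q g
  have hstepC : 1 / (2*(q':ℝ)) ≤ |δ| := by
    have h1 : |(a:ℝ) * Q / q - k| - |β - (a:ℝ) * Q / q| ≤ |δ| := by
      have : δ = ((a:ℝ) * Q / q - k) + (β - (a:ℝ) * Q / q) := by rw [hδ]; ring
      rw [this]
      have := abs_sub_abs_le_abs_sub ((a:ℝ) * Q / q - k) (-(β - (a:ℝ) * Q / q))
      rw [abs_neg, sub_neg_eq_add] at this
      linarith
    have h2 : 1/(2*(q:ℝ)) ≤ 1/(2*(q':ℝ)) := by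
      apply one_div_le_one_div_of_le (by positivity)
      linarith
    calc 1 / (2*(q':ℝ)) = 1/(q':ℝ) - 1/(2*(q':ℝ)) := by field_simp; ring
      _ ≤ 1/(q':ℝ) - 1/(2*(q:ℝ)) := by linarith
      _ ≤ |(a:ℝ) * Q / q - k| - |β - (a:ℝ) * Q / q| := by linarith
      _ ≤ |δ| := h1
  -- Step D/E
  have hD : 2 / (q':ℝ) ≤ ‖e β - 1‖ := by
    rw [e_sub_one]
    have := sin_lower β
    rw [← hk, ← hδ] at this
    calc 2 / (q':ℝ) = 2 * (1/(2*(q':ℝ))) * 2 := by field_simp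
      _ ≤ 2 * |δ| * 2 := by nlinarith
      _ = 2 * (2 * |δ|) := by ring
      _ ≤ 2 * |Real.sin (Real.pi * β)| := by nlinarith
  have hne1 : e β ≠ 1 := by
    intro h
    rw [h] at hD
    simp at hD
    exact absurd hD (not_le.mpr (by positivity))
  -- Step F : decompose and bound
  obtain ⟨n₀, M, hmod, hset⟩ := AP_decomp (Q:ℤ) N c₀ (by exact_mod_cast by omega)
  rw [hset]
  have hinj : ∀ j ∈ Finset.range M, ∀ j' ∈ Finset.range M,
      n₀ + (Q:ℤ) * (j:ℤ) = n₀ + (Q:ℤ) * (j':ℤ) → j = j' := by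
    intro j _ j' _ h
    have hQ0 : ((Q:ℕ):ℤ) ≠ 0 := by exact_mod_cast by omega
    have := mul_left_cancel₀ hQ0 (by linarith : (Q:ℤ) * (j:ℤ) = (Q:ℤ) * (j':ℤ))
    exact_mod_cast this
  rw [Finset.sum_image hinj]
  have hpt : ∀ j : ℕ, e (α * ((n₀ + (Q:ℤ) * (j:ℤ) : ℤ) : ℝ)) = e (α * (n₀:ℝ)) * (e β) ^ j := by
    intro j
    rw [← e_nat_mul, ← e_add]
    congr 1
    push_cast
    ring
  simp_rw [hpt]
  rw [← Finset.mul_sum, norm_mul, e_norm, one_mul]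
  have hbound := geom_bound (e β) (e_norm β) hne1 M
  have hfin : 2 / ‖e β - 1‖ ≤ (q':ℝ) := by
    have h2q' : (0:ℝ) < 2 / (q':ℝ) := by positivity
    rw [div_le_iff₀ (by linarith : (0:ℝ) < ‖e β - 1‖)]
    calc (2:ℝ) = (q':ℝ) * (2/(q':ℝ)) := by rw [mul_div_cancel₀]; positivity
      _ ≤ (q':ℝ) * ‖e β - 1‖ := by nlinarith
  have hgoal : (q:ℝ) / (g:ℝ) = (q':ℝ) := by
    rw [show ((q:ℕ):ℝ) = (g:ℝ) * q' by exact_mod_cast congrArg Nat.cast hqq']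
    field_simp
  rw [one_mul, hgoal]
  linarith
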